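/- Let H be a complex inner product space (Hilbert space), let u, v ∈ H be unit vectors, and let O be a continuous linear operator on H such that both O and Id − O are positive (i.e. 0 ≤ O ≤ I). Set y = Re⟨u, O u⟩ and z = |⟨v, u⟩|². Then Re⟨v, O v⟩ ≥ G₋(y, z). (Lower Cauchy–Schwarz constraint, Theorem 1 of the paper.) -/

import Mathlib

/-!
Split `⟪v, u⟫ = ⟪v, O u⟫ + ⟪v, (1 - O) u⟫` and apply Cauchy–Schwarz to the positive semidefinite
forms `⟪·, O ·⟫` and `⟪·, (1 - O) ·⟫`: with `x = re ⟪v, O v⟫` this gives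
`|⟪v, u⟫| ≤ √(y x) + √((1 - y) (1 - x))`. Writing `y = cos² α`, `x = cos² β`, `|⟪v, u⟫| = cos γ`
with angles in `[0, π/2]`, the bound reads `cos γ ≤ cos (α - β)`, so `β ≤ α + γ`. When
`y > 1 - z`, i.e. `α + γ < π/2`, this yields `x ≥ cos² (α + γ) = g₋(y, z)`.
-/

noncomputable def gMinus (y z : ℝ) : ℝ :=
  y + (1 - z) * (1 - 2 * y) - 2 * Real.sqrt (z * (1 - z) * y * (1 - y))

noncomputable def GMinus (y z : ℝ) : ℝ :=
  if y > 1 - z then gMinus y z else 0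

open RCLike

namespace LinearMap.IsPositive

variable {𝕜 E : Type*} [RCLike 𝕜] [NormedAddCommGroup E] [InnerProductSpace 𝕜 E]
  {T : E →ₗ[𝕜] E}

abbrev preInnerProductSpaceCore (hT : T.IsPositive) : PreInnerProductSpace.Core 𝕜 E where
  inner x y := inner 𝕜 x (T y)
  conj_inner_symm x y := by rw [inner_conj_symm, hT.isSymmetric]
  re_inner_nonneg := hT.re_inner_nonneg_right
  add_left x y _ := inner_add_left x y _
  smul_left x y r := inner_smul_left x _ r

theorem norm_inner_map_sq_le (hT : T.IsPositive) (x y : E) :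
    ‖inner 𝕜 x (T y)‖ ^ 2 ≤ re (inner 𝕜 x (T x)) * re (inner 𝕜 y (T y)) := by
  have := InnerProductSpace.Core.inner_mul_inner_self_le (c := hT.preInnerProductSpaceCore) x y
  change ‖inner 𝕜 x (T y)‖ * ‖inner 𝕜 y (T x)‖ ≤
    re (inner 𝕜 x (T x)) * re (inner 𝕜 y (T y)) at this
  rwa [← hT.isSymmetric y x, norm_inner_symm (T y) x, ← sq] at this

theorem norm_inner_map_le (hT : T.IsPositive) (x y : E) :
    ‖inner 𝕜 x (T y)‖ ≤ √(re (inner 𝕜 x (T x))) * √(re (inner 𝕜 y (T y))) := by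
  rw [← Real.sqrt_mul (hT.re_inner_nonneg_right x)]
  exact Real.le_sqrt_of_sq_le (hT.norm_inner_map_sq_le x y)

end LinearMap.IsPositive

section

variable {𝕜 E : Type*} [RCLike 𝕜] [NormedAddCommGroup E] [InnerProductSpace 𝕜 E]
  {O : E →L[𝕜] E}

theorem re_inner_id_sub_apply_self (O : E →L[𝕜] E) (w : E) :
    re (inner 𝕜 w ((ContinuousLinearMap.id 𝕜 E - O) w)) = ‖w‖ ^ 2 - re (inner 𝕜 w (O w)) := by
  simp [inner_sub_right]

theorem re_inner_map_self_le_one_of_isPositive_id_sub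
    (hO' : (ContinuousLinearMap.id 𝕜 E - O).IsPositive) {w : E} (hw : ‖w‖ = 1) :
    re (inner 𝕜 w (O w)) ≤ 1 := by
  have := hO'.re_inner_nonneg_right w
  rw [re_inner_id_sub_apply_self, hw] at this
  linarith

theorem norm_inner_le_of_isPositive_of_isPositive_id_sub (hO : O.IsPositive)
    (hO' : (ContinuousLinearMap.id 𝕜 E - O).IsPositive) {u v : E} (hu : ‖u‖ = 1)
    (hv : ‖v‖ = 1) :
    ‖inner 𝕜 v u‖ ≤ √(re (inner 𝕜 u (O u))) * √(re (inner 𝕜 v (O v))) +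
      √(1 - re (inner 𝕜 u (O u))) * √(1 - re (inner 𝕜 v (O v))) := by
  set P := ContinuousLinearMap.id 𝕜 E - O
  have hsplit : inner 𝕜 v u = inner 𝕜 v (O u) + inner 𝕜 v (P u) := by
    simp [P, inner_sub_right]
  calc ‖inner 𝕜 v u‖
      ≤ ‖inner 𝕜 v (O u)‖ + ‖inner 𝕜 v (P u)‖ := hsplit ▸ norm_add_le _ _
    _ ≤ √(re (inner 𝕜 v (O v))) * √(re (inner 𝕜 u (O u))) +
          √(re (inner 𝕜 v (P v))) * √(re (inner 𝕜 u (P u))) :=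
        add_le_add (hO.toLinearMap.norm_inner_map_le v u) (hO'.toLinearMap.norm_inner_map_le v u)
    _ = _ := by
        rw [re_inner_id_sub_apply_self, re_inner_id_sub_apply_self, hu, hv, one_pow]
        ring

end

/- With `a = cos α`, `c = cos γ`, `p = cos β`, the hypothesis says `cos γ ≤ cos (β - α)`.
Writing `r = cos (β - α)` and `s = sin (β - α)`, we have `p = a r - b s` and `|s| ≤ d`. -/
theorem mul_sub_mul_le_of_le_mul_add_mul {a b c d p q : ℝ} (ha : 0 ≤ a) (hb : 0 ≤ b)
    (hc : 0 ≤ c) (hd : 0 ≤ d) (hab : a ^ 2 + b ^ 2 = 1) (hpq : p ^ 2 + q ^ 2 = 1)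
    (hcd : c ^ 2 + d ^ 2 = 1) (h : c ≤ a * p + b * q) : a * c - b * d ≤ p := by
  set r := a * p + b * q
  set s := a * q - b * p
  have hp : p = a * r - b * s := by linear_combination (-p) * hab
  have hrs : r ^ 2 + s ^ 2 = 1 := by linear_combination (p ^ 2 + q ^ 2) * hab + hpq
  have hsd : s ≤ d := by
    refine (abs_le_of_sq_le_sq' ?_ hd).2
    nlinarith [mul_le_mul h h hc (hc.trans h)]
  rw [hp]
  gcongr

/- `gMinus (cos² α) (cos² γ) = cos² (α + γ)`. -/
theorem gMinus_sq_eq {a b c d : ℝ} (ha : 0 ≤ a) (hb : 0 ≤ b) (hc : 0 ≤ c) (hd : 0 ≤ d)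
    (hab : a ^ 2 + b ^ 2 = 1) (hcd : c ^ 2 + d ^ 2 = 1) :
    gMinus (a ^ 2) (c ^ 2) = (a * c - b * d) ^ 2 := by
  have hsqrt : √(c ^ 2 * (1 - c ^ 2) * a ^ 2 * (1 - a ^ 2)) = a * b * c * d := by
    rw [← Real.sqrt_sq (by positivity : 0 ≤ a * b * c * d)]
    congr 1
    linear_combination (-(c ^ 2 * a ^ 2)) * (d ^ 2 * hab + (1 - a ^ 2) * hcd)
  rw [gMinus, hsqrt]
  linear_combination (-d ^ 2) * hab - (1 - a ^ 2) * hcd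

theorem GMinus_sq_le_sq {a b c d p q : ℝ} (ha : 0 ≤ a) (hb : 0 ≤ b)
    (hc : 0 ≤ c) (hd : 0 ≤ d) (hab : a ^ 2 + b ^ 2 = 1) (hpq : p ^ 2 + q ^ 2 = 1)
    (hcd : c ^ 2 + d ^ 2 = 1) (h : c ≤ a * p + b * q) : GMinus (a ^ 2) (c ^ 2) ≤ p ^ 2 := by
  unfold GMinus
  split_ifs with hcap
  · have hsq : (a * c) ^ 2 - (b * d) ^ 2 = a ^ 2 + c ^ 2 - 1 := by
      linear_combination (-d ^ 2) * hab - (1 - a ^ 2) * hcd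
    have hbd : b * d ≤ a * c := (abs_le_of_sq_le_sq' (by linarith) (by positivity)).2
    rw [gMinus_sq_eq ha hb hc hd hab hcd]
    exact pow_le_pow_left₀ (sub_nonneg.2 hbd)
      (mul_sub_mul_le_of_le_mul_add_mul ha hb hc hd hab hpq hcd h) 2
  · positivity

theorem sq_sqrt_add_sq_sqrt_one_sub {t : ℝ} (h0 : 0 ≤ t) (h1 : t ≤ 1) :
    √t ^ 2 + √(1 - t) ^ 2 = 1 := by
  rw [Real.sq_sqrt h0, Real.sq_sqrt (sub_nonneg.2 h1)]
  ring

theorem GMinus_le_of_sqrt_le {x y z : ℝ} (hx0 : 0 ≤ x) (hx1 : x ≤ 1) (hy0 : 0 ≤ y)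
    (hy1 : y ≤ 1) (hz0 : 0 ≤ z) (hz1 : z ≤ 1) (h : √z ≤ √y * √x + √(1 - y) * √(1 - x)) :
    GMinus y z ≤ x := by
  have := GMinus_sq_le_sq (Real.sqrt_nonneg y) (Real.sqrt_nonneg (1 - y)) (Real.sqrt_nonneg z)
    (Real.sqrt_nonneg (1 - z)) (sq_sqrt_add_sq_sqrt_one_sub hy0 hy1)
    (sq_sqrt_add_sq_sqrt_one_sub hx0 hx1) (sq_sqrt_add_sq_sqrt_one_sub hz0 hz1) h
  rwa [Real.sq_sqrt hy0, Real.sq_sqrt hz0, Real.sq_sqrt hx0] at this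

theorem lower_cauchy_schwarz_constraint_general
    {H : Type*} [NormedAddCommGroup H] [InnerProductSpace ℂ H]
    (u v : H) (hu : ‖u‖ = 1) (hv : ‖v‖ = 1)
    (O : H →L[ℂ] H) (hO : O.IsPositive)
    (hO' : (ContinuousLinearMap.id ℂ H - O).IsPositive) :
    GMinus ((inner ℂ u (O u) : ℂ).re) (‖(inner ℂ v u : ℂ)‖ ^ 2) ≤
      (inner ℂ v (O v) : ℂ).re := by
  have hc1 : ‖inner ℂ v u‖ ≤ 1 := by simpa [hu, hv] using norm_inner_le_norm (𝕜 := ℂ) v u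
  refine GMinus_le_of_sqrt_le (hO.re_inner_nonneg_right v)
    (re_inner_map_self_le_one_of_isPositive_id_sub hO' hv) (hO.re_inner_nonneg_right u)
    (re_inner_map_self_le_one_of_isPositive_id_sub hO' hu) (sq_nonneg _)
    (pow_le_one₀ (norm_nonneg _) hc1) ?_
  rw [Real.sqrt_sq (norm_nonneg _)]
  exact norm_inner_le_of_isPositive_of_isPositive_id_sub hO hO' hu hv

theorem lower_cauchy_schwarz_constraint
    {H : Type*} [NormedAddCommGroup H] [InnerProductSpace ℂ H] [CompleteSpace H]
    (u v : H) (hu : ‖u‖ = 1) (hv : ‖v‖ = 1)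
    (O : H →L[ℂ] H) (hO : O.IsPositive)
    (hO' : (ContinuousLinearMap.id ℂ H - O).IsPositive) :
    GMinus ((inner ℂ u (O u) : ℂ).re) (‖(inner ℂ v u : ℂ)‖ ^ 2) ≤
      (inner ℂ v (O v) : ℂ).re :=
  lower_cauchy_schwarz_constraint_general u v hu hv O hO hO'
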